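/- arXiv:0809.4367 — 2 statements merged into one kernel-verified Lean document; each statement's English description precedes it below -/
import Mathlib

section
/- Let G be a finite connected bridgeless graph of genus g containing a vertex w of valency at least 4 with no loop at w. Construct G' by replacing w with two vertices w_1, w_2 joined by a new edge e, attaching two suitably chosen non-loop edges formerly at w to w_1 and all remaining edges formerly at w to w_2, where the two edges attached to w_1 are chosen so that they go into (possibly equal) components C_1 and C_p of G − w with w having valency ≥ 2 into each component. Then G' is connected, bridgeless, has genus g, and contracting the edge e in G' yields a graph isomorphic to G. -/
attribute [local instance] Classical.propDecidable

noncomputable section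

/-- Number of ends of edge `e` at vertex `v` (a loop counts twice). -/
def endCount {V E : Type} (ends : E → Sym2 V) (v : V) (e : E) : ℕ :=
  Sym2.lift ⟨fun a b => (if a = v then 1 else 0) + (if b = v then 1 else 0),
    fun _ _ => add_comm _ _⟩ (ends e)

/-- Degree of the vertex `v` in the edge set `F` (a loop counts twice). -/
def degIn {V E : Type} (ends : E → Sym2 V) (F : Finset E) (v : V) : ℕ :=
  ∑ e ∈ F, endCount ends v e

/-- An edge set of a multigraph is a forest iff every nonempty subset of it has a
vertex of degree exactly one. -/
def IsForest {V E : Type} (ends : E → Sym2 V) (F : Finset E) : Prop :=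
  ∀ F' ⊆ F, F'.Nonempty → ∃ v, degIn ends F' v = 1

/-- Adjacency in a multigraph. -/
def Adj {V E : Type} (ends : E → Sym2 V) (u v : V) : Prop := ∃ e, ends e = s(u, v)

/-- Connectedness of a multigraph. -/
def Conn {V E : Type} (ends : E → Sym2 V) : Prop :=
  ∀ u v : V, Relation.EqvGen (Adj ends) u v

/-- An edge is a bridge if deleting it disconnects the graph. -/
def IsBridge {V E : Type} (ends : E → Sym2 V) (e : E) : Prop :=
  ¬ Conn (fun e' : {x : E // x ≠ e} => ends e'.1)

/-- Valency of a vertex: a loop counts twice. -/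
def valency {V E : Type} (ends : E → Sym2 V) (v : V) : ℕ :=
  Nat.card {e : E // v ∈ ends e} + Nat.card {e : E // ends e = s(v, v)}

/-- A stable graph: connected, bridgeless, and no vertex of valency 2 unless it
carries a loop. -/
def IsStable {V E : Type} (ends : E → Sym2 V) : Prop :=
  Conn ends ∧ (∀ e, ¬ IsBridge ends e) ∧
    ∀ v, valency ends v = 2 → ∃ e, ends e = s(v, v)

/-- The relation on vertices identifying the endpoints of the contracted edges. -/
def contrRel {V E : Type} (ends : E → Sym2 V) (F : Set E) (u v : V) : Prop :=
  ∃ e ∈ F, ends e = s(u, v)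

/-- Vertices of the contracted graph `G/F`. -/
def CVert {V E : Type} (ends : E → Sym2 V) (F : Set E) : Type :=
  Quotient (Relation.EqvGen.setoid (contrRel ends F))

/-- Edge-end map of the contracted graph `G/F`. -/
def cEnds {V E : Type} (ends : E → Sym2 V) (F : Set E) (e : {e : E // e ∉ F}) :
    Sym2 (CVert ends F) :=
  Sym2.map (Quotient.mk (Relation.EqvGen.setoid (contrRel ends F))) (ends e.1)

/-- Isomorphism of multigraphs. -/
def IsIsoGraph {V1 E1 V2 E2 : Type} (ends1 : E1 → Sym2 V1) (ends2 : E2 → Sym2 V2) : Prop :=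
  ∃ (f : V1 ≃ V2) (g : E1 ≃ E2), ∀ e, Sym2.map f (ends1 e) = ends2 (g e)

end

/-!
Fix an edge `d = wx` and two further edges `b₁ = wy₁`, `b₂ = wy₂` at `w`. As `d` is not a bridge,
`w` and `x` are joined in `G - d`. If they were separated in both `G - d - b₁` and `G - d - b₂`,
then `y₁` would be joined to `x` in `G - d - b₁`, and deleting `b₂` from such a path yields a
path from `w` to `x` avoiding `d` and one of the `bᵢ`, a contradiction. So `w` and `x` stay
joined in some `G - d - bᵢ`, and then, since `bᵢ` is not a bridge, `G - d - bᵢ` is connected.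

Move `d` and `bᵢ` to a new vertex `w₁` joined to `w` by a new edge `e`. Deleting `e` leaves the
connected graph `G - d - bᵢ` with `w₁` attached to it by `d` and `bᵢ`; deleting an old edge `c`
leaves the connected graph `G - c` with `w` stretched along `e`. So the split graph is
bridgeless; it has one more vertex and one more edge, and contracting `e` gives back `G`.
-/

open Relation

lemma Relation.EqvGen.map {α β : Type} {r : α → α → Prop} {s : β → β → Prop} (f : α → β)
    (h : ∀ a b, r a b → EqvGen s (f a) (f b)) {a b : α} (hab : EqvGen r a b) :
    EqvGen s (f a) (f b) := by
  induction hab with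
  | rel a b hab => exact h a b hab
  | refl a => exact .refl _
  | symm a b _ ih => exact ih.symm
  | trans a b c _ _ ih₁ ih₂ => exact ih₁.trans _ _ _ ih₂

lemma Option.eqvGen_of_some {α : Type} {r : Option α → Option α → Prop} (a₀ : α)
    (hsome : ∀ a b, EqvGen r (some a) (some b)) (hnone : EqvGen r none (some a₀)) :
    ∀ x y, EqvGen r x y
  | none, none => .refl _
  | none, some b => hnone.trans _ _ _ (hsome a₀ b)
  | some a, none => (hsome a a₀).trans _ _ _ hnone.symm
  | some a, some b => hsome a b

section Linked

variable {V E : Type} (ends : E → Sym2 V)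

def Linked (P : E → Prop) : V → V → Prop := EqvGen (Adj fun e : {e : E // P e} => ends e.1)

variable {ends} {P Q : E → Prop} {u v a b : V}

lemma linked_of_ends {e : E} (hP : P e) (he : ends e = s(a, b)) : Linked ends P a b :=
  .rel _ _ ⟨⟨e, hP⟩, he⟩

lemma Linked.refl (u : V) : Linked ends P u u := EqvGen.refl u

lemma Linked.symm (h : Linked ends P u v) : Linked ends P v u := EqvGen.symm _ _ h

lemma Linked.trans {w : V} (h₁ : Linked ends P u v) (h₂ : Linked ends P v w) :
    Linked ends P u w :=
  EqvGen.trans _ _ _ h₁ h₂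

lemma Linked.mono (hPQ : ∀ e, P e → Q e) (h : Linked ends P u v) : Linked ends Q u v :=
  EqvGen.mono (fun _ _ ⟨e, he⟩ => ⟨⟨e.1, hPQ e.1 e.2⟩, he⟩) _ _ h

lemma Linked.eqvGen_adj (h : Linked ends P u v) : EqvGen (Adj ends) u v :=
  EqvGen.mono (fun _ _ ⟨e, he⟩ => ⟨e.1, he⟩) _ _ h

lemma Linked.split {c : E} (hc : ends c = s(a, b)) (h : Linked ends P u v) :
    Linked ends (fun e => P e ∧ e ≠ c) u v ∨
      (Linked ends (fun e => P e ∧ e ≠ c) u a ∧ Linked ends (fun e => P e ∧ e ≠ c) b v) ∨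
      (Linked ends (fun e => P e ∧ e ≠ c) u b ∧ Linked ends (fun e => P e ∧ e ≠ c) a v) := by
  induction h with
  | rel u v huv =>
    obtain ⟨⟨e, he⟩, hee⟩ := huv
    by_cases hec : e = c
    · subst hec
      rcases Sym2.eq_iff.mp (hc.symm.trans hee) with ⟨rfl, rfl⟩ | ⟨rfl, rfl⟩
      · exact .inr (.inl ⟨.refl _, .refl _⟩)
      · exact .inr (.inr ⟨.refl _, .refl _⟩)
    · exact .inl (linked_of_ends ⟨he, hec⟩ hee)
  | refl u => exact .inl (.refl u)
  | symm u v _ ih =>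
    rcases ih with h | ⟨h₁, h₂⟩ | ⟨h₁, h₂⟩
    · exact .inl h.symm
    · exact .inr (.inr ⟨h₂.symm, h₁.symm⟩)
    · exact .inr (.inl ⟨h₂.symm, h₁.symm⟩)
  | trans u v t _ _ ih₁ ih₂ =>
    rcases ih₁ with h | ⟨h₁, h₂⟩ | ⟨h₁, h₂⟩ <;> rcases ih₂ with h' | ⟨h₁', h₂'⟩ | ⟨h₁', h₂'⟩
    · exact .inl (h.trans h')
    · exact .inr (.inl ⟨h.trans h₁', h₂'⟩)
    · exact .inr (.inr ⟨h.trans h₁', h₂'⟩)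
    · exact .inr (.inl ⟨h₁, h₂.trans h'⟩)
    · exact .inl (h₁.trans ((h₂.trans h₁').symm.trans h₂'))
    · exact .inl (h₁.trans h₂')
    · exact .inr (.inr ⟨h₁, h₂.trans h'⟩)
    · exact .inl (h₁.trans h₂')
    · exact .inl (h₁.trans ((h₂.trans h₁').symm.trans h₂'))

lemma linked_delete_of_linked_ends {c : E} (hconn : ∀ u v, Linked ends P u v)
    (hc : ends c = s(a, b)) (hab : Linked ends (fun e => P e ∧ e ≠ c) a b) (u v : V) :
    Linked ends (fun e => P e ∧ e ≠ c) u v := by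
  rcases (hconn u v).split hc with h | ⟨h₁, h₂⟩ | ⟨h₁, h₂⟩
  · exact h
  · exact h₁.trans (hab.trans h₂)
  · exact h₁.trans (hab.symm.trans h₂)

lemma Linked.delete_of_two_edges {x y₁ y₂ : V} {b₁ b₂ : E} (hb : b₁ ≠ b₂) (hP₁ : P b₁)
    (hP₂ : P b₂) (hb₁ : ends b₁ = s(v, y₁)) (hb₂ : ends b₂ = s(v, y₂)) (h : Linked ends P v x) :
    Linked ends (fun e => P e ∧ e ≠ b₁) v x ∨ Linked ends (fun e => P e ∧ e ≠ b₂) v x := by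
  by_contra! ⟨h₁, h₂⟩
  have hy₁ : Linked ends (fun e => P e ∧ e ≠ b₁) y₁ x := by
    rcases h.split hb₁ with h' | ⟨-, h'⟩ | ⟨-, h'⟩
    · exact absurd h' h₁
    · exact h'
    · exact absurd h' h₁
  have hP₀₁ : ∀ e, (P e ∧ e ≠ b₁) ∧ e ≠ b₂ → P e ∧ e ≠ b₁ := fun e he => he.1
  have hP₀₂ : ∀ e, (P e ∧ e ≠ b₁) ∧ e ≠ b₂ → P e ∧ e ≠ b₂ := fun e he => ⟨he.1.1, he.2⟩
  rcases hy₁.split hb₂ with h' | ⟨-, h'⟩ | ⟨-, h'⟩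
  · exact h₂ ((linked_of_ends ⟨hP₁, hb⟩ hb₁).trans (h'.mono hP₀₂))
  · exact h₁ ((linked_of_ends ⟨hP₂, hb.symm⟩ hb₂).trans (h'.mono hP₀₁))
  · exact h₁ (h'.mono hP₀₁)

end Linked

section Bridgeless

variable {V E : Type} {ends : E → Sym2 V}

lemma exists_two_edges_conn_delete (hbr : ∀ c u v, Linked ends (· ≠ c) u v) {w : V}
    (hw : 2 < Nat.card {e // w ∈ ends e}) :
    ∃ d₁ d₂, d₁ ≠ d₂ ∧ w ∈ ends d₁ ∧ w ∈ ends d₂ ∧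
      ∀ u v, Linked ends (· ∉ ({d₁, d₂} : Set E)) u v := by
  obtain ⟨⟨d, hd⟩, ⟨b₁, hb₁⟩, ⟨b₂, hb₂⟩, hdb₁, hdb₂, hb₁₂⟩ :
      ∃ a b c : {e // w ∈ ends e}, a ≠ b ∧ a ≠ c ∧ b ≠ c := by
    have := Nat.finite_of_card_ne_zero hw.ne_bot
    have := Fintype.ofFinite {e // w ∈ ends e}
    rwa [Nat.card_eq_fintype_card, Fintype.two_lt_card_iff] at hw
  replace hdb₁ : d ≠ b₁ := fun h => hdb₁ (Subtype.ext h)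
  replace hdb₂ : d ≠ b₂ := fun h => hdb₂ (Subtype.ext h)
  replace hb₁₂ : b₁ ≠ b₂ := fun h => hb₁₂ (Subtype.ext h)
  obtain ⟨x, hx⟩ := Sym2.mem_iff_exists.mp hd
  obtain ⟨y₁, hy₁⟩ := Sym2.mem_iff_exists.mp hb₁
  obtain ⟨y₂, hy₂⟩ := Sym2.mem_iff_exists.mp hb₂
  have hconn : ∀ b, Linked ends (fun e => e ≠ d ∧ e ≠ b) w x →
      ∀ u v, Linked ends (· ∉ ({d, b} : Set E)) u v := fun b hwx u v =>
    (linked_delete_of_linked_ends (hbr b) hx (hwx.mono fun _ he => ⟨he.2, he.1⟩) u v).mono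
      fun e he => by simp [he.1, he.2]
  rcases (hbr d w x).delete_of_two_edges hb₁₂ hdb₁.symm hdb₂.symm hy₁ hy₂ with h | h
  · exact ⟨d, b₁, hdb₁, hd, hb₁, hconn b₁ h⟩
  · exact ⟨d, b₂, hdb₂, hd, hb₂, hconn b₂ h⟩

end Bridgeless

section Split

variable {V E : Type} (ends : E → Sym2 V) (w : V) (S : Set E)

/-- Splitting `w` along `S`: the vertex `none` is the new vertex receiving the edges of `S`,
`some w` keeps the other edges at `w`, and the edge `none` joins the two. -/
noncomputable def splitEnds : Option E → Sym2 (Option V)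
  | none => s(none, some w)
  | some e => if e ∈ S then (ends e).map fun u => if u = w then none else some u
      else (ends e).map some

variable {ends w S} {Q : Option E → Prop}

lemma linked_splitEnds_some (hnone : Q none) {e : E} (he : Q (some e)) {a b : V}
    (hab : ends e = s(a, b)) : Linked (splitEnds ends w S) Q (some a) (some b) := by
  have hmove : ∀ u, Linked (splitEnds ends w S) Q (some u) (if u = w then none else some u) := by
    intro u
    split_ifs with hu
    · exact (linked_of_ends hnone (hu ▸ rfl)).symm
    · exact .refl _
  by_cases heS : e ∈ S
  · have hends : splitEnds ends w S (some e) =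
        s(if a = w then none else some a, if b = w then none else some b) := by
      simp [splitEnds, heS, hab]
    exact (hmove a).trans ((linked_of_ends he hends).trans (hmove b).symm)
  · exact linked_of_ends he (by simp [splitEnds, heS, hab])

lemma conn_splitEnds {P : E → Prop} (hPQ : ∀ e, P e → Q (some e)) (hnone : Q none)
    (hconn : ∀ u v, Linked ends P u v) (x y : Option V) : Linked (splitEnds ends w S) Q x y :=
  Option.eqvGen_of_some w
    (fun a b => EqvGen.map some (fun _ _ ⟨e, he⟩ => linked_splitEnds_some hnone (hPQ e.1 e.2) he)
      (hconn a b))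
    (linked_of_ends hnone rfl) x y

lemma conn_splitEnds_delete_none (hconn : ∀ u v, Linked ends (· ∉ S) u v) {d : E} (hd : d ∈ S)
    {x : V} (hdx : ends d = s(w, x)) (hx : x ≠ w) (y z : Option V) :
    Linked (splitEnds ends w S) (· ≠ none) y z := by
  have hsome (a b : V) : Linked (splitEnds ends w S) (· ≠ none) (some a) (some b) :=
    EqvGen.map some (fun _ _ ⟨⟨e, he⟩, hab⟩ =>
      linked_of_ends (Option.some_ne_none e) (by simp [splitEnds, he, show ends e = _ from hab]))
      (hconn a b)
  exact Option.eqvGen_of_some x hsome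
    (linked_of_ends (Option.some_ne_none d) (by simp [splitEnds, hd, hdx, hx])) y z

lemma setOf_none_mem_splitEnds (hS : ∀ e ∈ S, w ∈ ends e) :
    {x | none ∈ splitEnds ends w S x} = insert none (some '' S) := by
  ext (_ | e)
  · simp [splitEnds]
  · by_cases he : e ∈ S <;> simp [splitEnds, he, hS]

lemma splitEnds_ne_loop_none (hloop : ∀ e ∈ S, ends e ≠ s(w, w)) (x : Option E) :
    splitEnds ends w S x ≠ s(none, none) := by
  rcases x with _ | e
  · simp [splitEnds]
  by_cases he : e ∈ S
  · have hne := hloop e he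
    simp only [splitEnds, if_pos he]
    generalize ends e = z at hne
    induction z using Sym2.ind with
    | h a b => by_cases ha : a = w <;> by_cases hb : b = w <;> simp_all
  · simp only [splitEnds, if_neg he]
    intro h
    have : (none : Option V) ∈ (ends e).map some := h ▸ Sym2.mem_mk_left _ _
    simp at this

lemma valency_splitEnds_none [Finite E] (hS : ∀ e ∈ S, w ∈ ends e)
    (hloop : ∀ e ∈ S, ends e ≠ s(w, w)) :
    valency (splitEnds ends w S) none = Nat.card S + 1 := by
  have : IsEmpty {x // splitEnds ends w S x = s(none, none)} :=
    ⟨fun x => splitEnds_ne_loop_none hloop x.1 x.2⟩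
  rw [valency, Nat.card_of_isEmpty (α := {x // _ = _}), add_zero, ← Set.coe_ofPred,
    Nat.card_coe_set_eq, setOf_none_mem_splitEnds hS, Set.ncard_insert_of_notMem (by simp),
    Set.ncard_image_of_injective _ (Option.some_injective E), Nat.card_coe_set_eq]

end Split

section Contract

variable {V E : Type} {ends : E → Sym2 V} {w : V} {S : Set E}

lemma eqvGen_contrRel_splitEnds_iff {x y : Option V} :
    EqvGen (contrRel (splitEnds ends w S) {none}) x y ↔ x.getD w = y.getD w := by
  constructor
  · intro h
    induction h with
    | rel x y hxy =>
      obtain ⟨e, rfl, he⟩ := hxy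
      rcases Sym2.eq_iff.mp he with ⟨rfl, rfl⟩ | ⟨rfl, rfl⟩ <;> rfl
    | refl => rfl
    | symm _ _ _ ih => exact ih.symm
    | trans _ _ _ _ _ ih₁ ih₂ => exact ih₁.trans ih₂
  · have hw : EqvGen (contrRel (splitEnds ends w S) {none}) none (some w) :=
      .rel _ _ ⟨none, rfl, rfl⟩
    rcases x with _ | a <;> rcases y with _ | b <;> simp only [Option.getD_none, Option.getD_some]
    · exact fun _ => .refl _
    · rintro rfl; exact hw
    · rintro rfl; exact hw.symm
    · rintro rfl; exact .refl _

lemma map_getD_splitEnds_some (e : E) :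
    (splitEnds ends w S (some e)).map (·.getD w) = ends e := by
  by_cases he : e ∈ S
  · simp only [splitEnds, if_pos he, Sym2.map_map]
    refine (Sym2.map_congr fun u _ => ?_).trans (congrFun Sym2.map_id' (ends e))
    by_cases hu : u = w <;> simp [hu]
  · simp [splitEnds, he, Sym2.map_map]

lemma isIsoGraph_cEnds_splitEnds :
    IsIsoGraph (cEnds (splitEnds ends w S) {none}) ends := by
  let f : CVert (splitEnds ends w S) {none} ≃ V :=
    (Quotient.congrRight fun _ _ => eqvGen_contrRel_splitEnds_iff).trans
      (Setoid.quotientKerEquivOfSurjective _ fun v => ⟨some v, rfl⟩)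
  let g : {x : Option E // x ∉ ({none} : Set (Option E))} ≃ E :=
    (Equiv.subtypeEquivRight fun x => by simp [Option.isSome_iff_ne_none]).trans
      (Equiv.optionIsSomeEquiv E)
  refine ⟨f, g, ?_⟩
  rintro ⟨_ | e, he⟩
  · exact absurd rfl he
  · exact (Sym2.map_map _).trans (map_getD_splitEnds_some e)

end Contract

theorem stmt4_general {V E : Type} [Fintype V] [Fintype E] (ends : E → Sym2 V) (g : ℤ)
    (hbr : ∀ e, ¬ IsBridge ends e)
    (w : V) (hval : 4 ≤ valency ends w) (hnoloop : ∀ e, ends e ≠ s(w, w))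
    (hg : (Nat.card E : ℤ) - Nat.card V + 1 = g) :
    ∃ (V' E' : Type) (_ : Fintype V') (_ : Fintype E') (ends' : E' → Sym2 V')
      (w1 w2 : V') (e : E'),
      ends' e = s(w1, w2) ∧ w1 ≠ w2 ∧
      Conn ends' ∧ (∀ e', ¬ IsBridge ends' e') ∧
      (Nat.card E' : ℤ) - Nat.card V' + 1 = g ∧
      valency ends' w1 = 3 ∧
      IsIsoGraph (cEnds ends' ({e} : Set E')) ends := by
  have hbr' (c : E) : ∀ u v, Linked ends (· ≠ c) u v := not_not.mp (hbr c)
  have hdeg : 2 < Nat.card {e // w ∈ ends e} := by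
    have : IsEmpty {e // ends e = s(w, w)} := ⟨fun e => hnoloop e.1 e.2⟩
    rw [valency, Nat.card_of_isEmpty (α := {e // _ = _})] at hval
    omega
  obtain ⟨d₁, d₂, hd, hd₁, hd₂, hconn⟩ := exists_two_edges_conn_delete hbr' hdeg
  obtain ⟨x, hx⟩ := Sym2.mem_iff_exists.mp hd₁
  have hS : ∀ e ∈ ({d₁, d₂} : Set E), w ∈ ends e := by rintro e (rfl | rfl) <;> assumption
  have hsplit : ∀ e' y z, Linked (splitEnds ends w {d₁, d₂}) (· ≠ e') y z
    | none => conn_splitEnds_delete_none hconn (.inl rfl) hx fun h => hnoloop d₁ (h ▸ hx)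
    | some c =>
      conn_splitEnds (fun e he => by simpa using he) (Option.some_ne_none c).symm (hbr' c)
  refine ⟨Option V, Option E, inferInstance, inferInstance, splitEnds ends w {d₁, d₂}, none,
    some w, none, rfl, (Option.some_ne_none w).symm, fun y z => (hsplit none y z).eqvGen_adj,
    fun e' h => h (hsplit e'), ?_, ?_, isIsoGraph_cEnds_splitEnds⟩
  · rw [Finite.card_option, Finite.card_option]
    push_cast
    linarith
  · rw [valency_splitEnds_none hS fun e _ => hnoloop e, Nat.card_coe_set_eq, Set.ncard_pair hd]

/-- splitting a loopless vertex `w` of valency ≥ 4 in a finite connected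
bridgeless graph of genus `g` into two vertices `w1, w2` joined by a new edge `e`
(two suitably chosen old edges going to `w1`, the rest to `w2`) produces a connected
bridgeless graph of genus `g` in which `w1` has valency 3 and whose contraction
along `e` is isomorphic to the original graph. -/
theorem stmt4 {V E : Type} [Fintype V] [Fintype E] (ends : E → Sym2 V) (g : ℤ)
    (hconn : Conn ends) (hbr : ∀ e, ¬ IsBridge ends e)
    (w : V) (hval : 4 ≤ valency ends w) (hnoloop : ∀ e, ends e ≠ s(w, w))
    (hg : (Nat.card E : ℤ) - Nat.card V + 1 = g) :
    ∃ (V' E' : Type) (_ : Fintype V') (_ : Fintype E') (ends' : E' → Sym2 V')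
      (w1 w2 : V') (e : E'),
      ends' e = s(w1, w2) ∧ w1 ≠ w2 ∧
      Conn ends' ∧ (∀ e', ¬ IsBridge ends' e') ∧
      (Nat.card E' : ℤ) - Nat.card V' + 1 = g ∧
      valency ends' w1 = 3 ∧
      IsIsoGraph (cEnds ends' ({e} : Set E')) ends :=
  stmt4_general ends g hbr w hval hnoloop hg
end

section
/- For every k ≥ 3, the graph consisting of a k-cycle with i loops attached at the i-th vertex (for i = 1,...,k) has exactly k orbits of spanning trees under its automorphism group; in fact its automorphism group fixes every vertex of the cycle, and its spanning trees are obtained by deleting one of the k cycle edges, no two of which are related by an automorphism. -/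
/-!
Vertex `j` carries `j + 1` loops and an automorphism preserves the number of loops at a vertex,
so it fixes every vertex; since `k ≥ 3`, no two cycle edges join the same pair of vertices, so it
fixes every cycle edge as well. A forest has no loops, so a spanning tree, having `k - 1` edges,
is the cycle minus one edge; conversely, every proper subset of the cycle edges has a leaf.
-/

attribute [local instance] Classical.propDecidable

section Multigraph

variable {V E : Type} {ends : E → Sym2 V}

lemma endCount_eq_zero {v : V} {e : E} (h : v ∉ ends e) : endCount ends v e = 0 := by
  induction hx : ends e using Sym2.ind with
  | _ a b =>
    rw [hx] at h
    simp_all [endCount, Sym2.mem_iff, eq_comm]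

lemma endCount_eq_one {u v : V} {e : E} (h : ends e = s(u, v)) (huv : u ≠ v) :
    endCount ends v e = 1 := by
  simp [endCount, h, huv]

lemma IsForest.not_isDiag {F : Finset E} (hF : IsForest ends F) {e : E} (he : e ∈ F) :
    ¬ (ends e).IsDiag := by
  intro hdiag
  obtain ⟨v, hv⟩ := hF {e} (by simpa using he) (Finset.singleton_nonempty e)
  induction hx : ends e using Sym2.ind with
  | _ a b =>
    rw [hx, Sym2.mk_isDiag_iff] at hdiag
    subst hdiag
    simp only [degIn, Finset.sum_singleton, endCount, hx, Sym2.lift_mk] at hv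
    split_ifs at hv <;> omega

noncomputable def loopCount (ends : E → Sym2 V) (v : V) : ℕ :=
  Nat.card {e : E // ends e = s(v, v)}

lemma loopCount_map_of_iso {V' E' : Type} {ends' : E' → Sym2 V'} (f : V ≃ V') (g : E ≃ E')
    (h : ∀ e, Sym2.map f (ends e) = ends' (g e)) (v : V) :
    loopCount ends' (f v) = loopCount ends v := by
  refine (Nat.card_congr (g.subtypeEquiv fun e => ?_)).symm
  rw [← h, ← Sym2.map_mk]
  exact (Sym2.map.injective f.injective).eq_iff.symm

end Multigraph

section Cycle

variable {k : ℕ} [NeZero k]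

lemma Fin.add_one_ne_self (hk : 1 < k) (i : Fin k) : i + 1 ≠ i := by
  rw [Ne, add_eq_left, Fin.one_eq_zero_iff]
  omega

lemma Fin.add_one_add_one_ne_self (hk : 2 < k) (i : Fin k) : i + 1 + 1 ≠ i := by
  rw [add_assoc, Ne, add_eq_left, Fin.ext_iff]
  simp [Fin.val_add, Nat.mod_eq_of_lt hk]

open Fin.NatCast in
lemma Fin.exists_mem_add_one_notMem {A : Finset (Fin k)} (hA : A.Nonempty) {i : Fin k}
    (hi : i ∉ A) : ∃ j ∈ A, j + 1 ∉ A := by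
  by_contra! hclosed
  obtain ⟨j₀, hj₀⟩ := hA
  have hiter : ∀ n : ℕ, j₀ + (n : Fin k) ∈ A := by
    intro n
    induction n with
    | zero => simpa using hj₀
    | succ n ih => simpa [add_assoc] using hclosed _ ih
  exact hi (by simpa using hiter (i - j₀).val)

variable {E : Type} {ends : E → Sym2 (Fin k)} {c : Fin k → E}

lemma degIn_cycle_eq_one (hk : 1 < k) (hc : ∀ i, ends (c i) = s(i, i + 1)) {F : Finset E}
    (hF : ∀ e ∈ F, ∃ m, e = c m) {j : Fin k} (hj : c j ∈ F) (hj' : c (j + 1) ∉ F) :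
    degIn ends F (j + 1) = 1 := by
  rw [degIn, Finset.sum_eq_single_of_mem _ hj]
  · exact endCount_eq_one (hc j) (Fin.add_one_ne_self hk j).symm
  · rintro e he hej
    obtain ⟨m, rfl⟩ := hF e he
    apply endCount_eq_zero
    have hmj : m ≠ j := by rintro rfl; exact hej rfl
    have hmj' : m ≠ j + 1 := by rintro rfl; exact hj' he
    simp [hc, hmj'.symm, (add_left_injective 1).ne hmj |>.symm]

lemma isForest_cycle_erase [DecidableEq E] (hk : 1 < k) (hc : ∀ i, ends (c i) = s(i, i + 1))
    (i : Fin k) :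
    IsForest ends ((Finset.univ.image c).erase (c i)) := by
  intro F hF hne
  have hFc : ∀ e ∈ F, ∃ m, e = c m := fun e he => by
    obtain ⟨m, -, rfl⟩ := Finset.mem_image.mp (Finset.mem_of_mem_erase (hF he))
    exact ⟨m, rfl⟩
  set A := Finset.univ.filter (c · ∈ F)
  have hA : A.Nonempty := by
    obtain ⟨e, he⟩ := hne
    obtain ⟨m, rfl⟩ := hFc e he
    exact ⟨m, by simpa [A] using he⟩
  have hiA : i ∉ A := by simpa [A] using fun h => Finset.notMem_erase _ _ (hF h)
  obtain ⟨j, hj, hj'⟩ := Fin.exists_mem_add_one_notMem hA hiA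
  simp only [A, Finset.mem_filter, Finset.mem_univ, true_and] at hj hj'
  exact ⟨j + 1, degIn_cycle_eq_one hk hc hFc hj hj'⟩

end Cycle

section LoopedCycle

abbrev LoopedCycleEdge (k : ℕ) := Fin k ⊕ Σ j : Fin k, Fin (j.val + 1)

variable {k : ℕ} [NeZero k] {ends : LoopedCycleEdge k → Sym2 (Fin k)}

lemma LoopedCycle.eq_inr_of_ends_eq (hk : 1 < k)
    (hcyc : ∀ i : Fin k, ends (Sum.inl i) = s(i, i + 1))
    (hloop : ∀ (j : Fin k) (a : Fin (j.val + 1)), ends (Sum.inr ⟨j, a⟩) = s(j, j))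
    {e : LoopedCycleEdge k} {w : Fin k} (he : ends e = s(w, w)) :
    ∃ b : Fin (w.val + 1), e = Sum.inr ⟨w, b⟩ := by
  rcases e with m | ⟨j, a⟩
  · rw [hcyc, Sym2.eq_iff] at he
    obtain ⟨rfl, h⟩ | ⟨rfl, h⟩ := he <;> exact absurd h (Fin.add_one_ne_self hk m)
  · rw [hloop, Sym2.eq_iff, or_self] at he
    obtain ⟨rfl, -⟩ := he
    exact ⟨a, rfl⟩

lemma LoopedCycle.loopCount_eq (hk : 1 < k)
    (hcyc : ∀ i : Fin k, ends (Sum.inl i) = s(i, i + 1))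
    (hloop : ∀ (j : Fin k) (a : Fin (j.val + 1)), ends (Sum.inr ⟨j, a⟩) = s(j, j))
    (v : Fin k) : loopCount ends v = v.val + 1 := by
  have hloops : {e | ends e = s(v, v)} =
      Set.range (fun b : Fin (v.val + 1) => (Sum.inr ⟨v, b⟩ : LoopedCycleEdge k)) := by
    ext e
    constructor
    · rintro he
      obtain ⟨b, rfl⟩ := LoopedCycle.eq_inr_of_ends_eq hk hcyc hloop he
      exact ⟨b, rfl⟩
    · rintro ⟨b, rfl⟩
      exact hloop v b
  change Nat.card {e | ends e = s(v, v)} = _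
  rw [hloops, Nat.card_range_of_injective fun b b' hb => by simpa using hb,
    Nat.card_eq_fintype_card, Fintype.card_fin]

lemma LoopedCycle.eq_refl_of_automorphism (hk : 1 < k)
    (hcyc : ∀ i : Fin k, ends (Sum.inl i) = s(i, i + 1))
    (hloop : ∀ (j : Fin k) (a : Fin (j.val + 1)), ends (Sum.inr ⟨j, a⟩) = s(j, j))
    (f : Fin k ≃ Fin k) (g : LoopedCycleEdge k ≃ LoopedCycleEdge k)
    (h : ∀ e, Sym2.map f (ends e) = ends (g e)) : f = Equiv.refl _ := by
  ext v
  have hv := loopCount_map_of_iso f g h v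
  rw [LoopedCycle.loopCount_eq hk hcyc hloop, LoopedCycle.loopCount_eq hk hcyc hloop] at hv
  simpa using hv

lemma LoopedCycle.eq_inl_of_ends_eq (hk : 2 < k)
    (hcyc : ∀ i : Fin k, ends (Sum.inl i) = s(i, i + 1))
    (hloop : ∀ (j : Fin k) (a : Fin (j.val + 1)), ends (Sum.inr ⟨j, a⟩) = s(j, j))
    {e : LoopedCycleEdge k} {m : Fin k} (he : ends e = s(m, m + 1)) : e = Sum.inl m := by
  rcases e with m' | ⟨j, a⟩
  · rw [hcyc, Sym2.eq_iff] at he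
    obtain ⟨rfl, -⟩ | ⟨rfl, h⟩ := he
    · rfl
    · exact absurd h (Fin.add_one_add_one_ne_self hk m)
  · rw [hloop, Sym2.eq_iff] at he
    obtain ⟨rfl, h⟩ | ⟨h, rfl⟩ := he <;>
      exact absurd h.symm (Fin.add_one_ne_self (by omega) _)

lemma LoopedCycle.automorphism_apply_inl (hk : 2 < k)
    (hcyc : ∀ i : Fin k, ends (Sum.inl i) = s(i, i + 1))
    (hloop : ∀ (j : Fin k) (a : Fin (j.val + 1)), ends (Sum.inr ⟨j, a⟩) = s(j, j))
    (f : Fin k ≃ Fin k) (g : LoopedCycleEdge k ≃ LoopedCycleEdge k)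
    (h : ∀ e, Sym2.map f (ends e) = ends (g e)) (m : Fin k) : g (Sum.inl m) = Sum.inl m := by
  obtain rfl := LoopedCycle.eq_refl_of_automorphism (by omega) hcyc hloop f g h
  exact LoopedCycle.eq_inl_of_ends_eq hk hcyc hloop (by simpa [hcyc] using (h (Sum.inl m)).symm)

lemma LoopedCycle.isForest_and_card_iff (hk : 1 < k)
    (hcyc : ∀ i : Fin k, ends (Sum.inl i) = s(i, i + 1))
    (hloop : ∀ (j : Fin k) (a : Fin (j.val + 1)), ends (Sum.inr ⟨j, a⟩) = s(j, j))
    (T : Finset (LoopedCycleEdge k)) :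
    IsForest ends T ∧ T.card = k - 1 ↔
      ∃ i : Fin k, T = (Finset.univ.image (Sum.inl : Fin k → LoopedCycleEdge k)).erase
        (Sum.inl i) := by
  set S := Finset.univ.image (Sum.inl : Fin k → LoopedCycleEdge k)
  have hS : S.card = k := by
    rw [Finset.card_image_of_injective _ Sum.inl_injective, Finset.card_univ, Fintype.card_fin]
  have hmemS : ∀ i, Sum.inl i ∈ S := fun i => Finset.mem_image_of_mem _ (Finset.mem_univ i)
  constructor
  · rintro ⟨hT, hcard⟩
    have hTS : T ⊆ S := by
      rintro (m | ⟨j, a⟩) he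
      · exact hmemS m
      · exact absurd (by simp [hloop]) (hT.not_isDiag he)
    obtain ⟨_, hxS, hxT⟩ := Finset.exists_of_ssubset (hTS.ssubset_of_ne (by rintro rfl; omega))
    obtain ⟨i, -, rfl⟩ := Finset.mem_image.mp hxS
    refine ⟨i, Finset.eq_of_subset_of_card_le (fun e he => ?_) ?_⟩
    · exact Finset.mem_erase.mpr ⟨by rintro rfl; exact hxT he, hTS he⟩
    · rw [Finset.card_erase_of_mem hxS, hS, hcard]
  · rintro ⟨i, rfl⟩
    exact ⟨isForest_cycle_erase hk hcyc i, by rw [Finset.card_erase_of_mem (hmemS i), hS]⟩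

lemma LoopedCycle.eq_of_automorphism_image_cycle_erase (hk : 2 < k)
    (hcyc : ∀ i : Fin k, ends (Sum.inl i) = s(i, i + 1))
    (hloop : ∀ (j : Fin k) (a : Fin (j.val + 1)), ends (Sum.inr ⟨j, a⟩) = s(j, j))
    (f : Fin k ≃ Fin k) (g : LoopedCycleEdge k ≃ LoopedCycleEdge k)
    (h : ∀ e, Sym2.map f (ends e) = ends (g e)) {i i' : Fin k}
    (himg :
      ((Finset.univ.image (Sum.inl : Fin k → LoopedCycleEdge k)).erase (Sum.inl i)).image g =
        (Finset.univ.image (Sum.inl : Fin k → LoopedCycleEdge k)).erase (Sum.inl i')) :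
    i = i' := by
  set S := Finset.univ.image (Sum.inl : Fin k → LoopedCycleEdge k)
  have hfix : (S.erase (Sum.inl i)).image g = S.erase (Sum.inl i) := by
    refine (Finset.image_congr fun e he => ?_).trans Finset.image_id
    obtain ⟨m, -, rfl⟩ := Finset.mem_image.mp (Finset.mem_of_mem_erase he)
    exact LoopedCycle.automorphism_apply_inl hk hcyc hloop f g h m
  rw [hfix, Finset.erase_inj _ (Finset.mem_image_of_mem _ (Finset.mem_univ i))] at himg
  exact Sum.inl_injective himg

end LoopedCycle

/-- for `k ≥ 3`, the graph consisting of a `k`-cycle with `j+1` loops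
attached at the `j`-th vertex (`j = 0,…,k-1`, i.e. `i` loops at vertex number `i` for
`i = 1,…,k`) has trivial automorphism action on vertices; its spanning trees are
exactly the sets obtained from the cycle edges by deleting one of them, and no two of
these are related by an automorphism — so there are exactly `k` orbits of spanning
trees. -/
theorem stmt10 (k : ℕ) (hk : 3 ≤ k)
    (ends : (Fin k ⊕ (Σ j : Fin k, Fin (j.val + 1))) → Sym2 (Fin k))
    (hcyc : ∀ i : Fin k,
      ends (Sum.inl i) = s(i, ⟨(i.val + 1) % k, Nat.mod_lt _ (by omega)⟩))
    (hloop : ∀ (j : Fin k) (a : Fin (j.val + 1)), ends (Sum.inr ⟨j, a⟩) = s(j, j)) :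
    (∀ (f : Fin k ≃ Fin k)
        (gp : (Fin k ⊕ (Σ j : Fin k, Fin (j.val + 1))) ≃
              (Fin k ⊕ (Σ j : Fin k, Fin (j.val + 1)))),
        (∀ e, Sym2.map f (ends e) = ends (gp e)) → f = Equiv.refl _) ∧
    (∀ T : Finset (Fin k ⊕ (Σ j : Fin k, Fin (j.val + 1))),
        (IsForest ends T ∧ T.card = k - 1) ↔
          ∃ i : Fin k,
            T = (Finset.univ.image
                  (Sum.inl : Fin k → (Fin k ⊕ (Σ j : Fin k, Fin (j.val + 1))))).erase
                (Sum.inl i)) ∧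
    (∀ (i i' : Fin k) (f : Fin k ≃ Fin k)
        (gp : (Fin k ⊕ (Σ j : Fin k, Fin (j.val + 1))) ≃
              (Fin k ⊕ (Σ j : Fin k, Fin (j.val + 1)))),
        (∀ e, Sym2.map f (ends e) = ends (gp e)) →
        Finset.image gp
            ((Finset.univ.image
                (Sum.inl : Fin k → (Fin k ⊕ (Σ j : Fin k, Fin (j.val + 1))))).erase
              (Sum.inl i)) =
          (Finset.univ.image
              (Sum.inl : Fin k → (Fin k ⊕ (Σ j : Fin k, Fin (j.val + 1))))).erase
            (Sum.inl i') →
        i = i') := by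
  have : NeZero k := ⟨by omega⟩
  have hcyc' : ∀ i : Fin k, ends (Sum.inl i) = s(i, i + 1) := fun i => by
    have hsucc : (⟨(i.val + 1) % k, Nat.mod_lt _ (by omega)⟩ : Fin k) = i + 1 := by
      ext
      simp [Fin.val_add]
    rw [hcyc i, hsucc]
  exact ⟨LoopedCycle.eq_refl_of_automorphism (by omega) hcyc' hloop,
    LoopedCycle.isForest_and_card_iff (by omega) hcyc' hloop,
    fun _ _ f g h => LoopedCycle.eq_of_automorphism_image_cycle_erase hk hcyc' hloop f g h⟩
end
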